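/- Let R and S be commutative rings with unity, f : R → S a ring homomorphism, and J an ideal of S that is finitely generated as an R-module via f. Then the embedding ι_R : R → R⋈^f J is an integral ring extension, and for every prime ideal p of R one has (p^e)^c = p and dim((R⋈^f J)/p^e) = dim(R/p), where dim denotes Krull dimension. -/

import Mathlib

open IsLocalRing RingTheory.Sequence

noncomputable section

universe u

/-- The Krull dimension of a module `M`, defined as `dim (R / Ann_R M)`. -/
def moduleDim (R : Type u) [CommRing R] (M : Type u) [AddCommGroup M] [Module R M] :
    WithBot ℕ∞ :=
  ringKrullDim (R ⧸ Module.annihilator R M)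


/-- Addition of (possibly infinite, possibly `⊥`) dimensions. -/
def dimAdd (a b : WithBot ℕ∞) : WithBot ℕ∞ := a + b

/-- `xs` is a generalized regular sequence of `M`: a sequence of nonunits (i.e. elements of the
maximal ideal, in the local case) such that `xs[i] ∉ p` for every associated prime `p` of
`M / (xs[0], …, xs[i-1])M` with `dim R/p > 1`. -/
def IsGenRegSeq (R : Type u) [CommRing R] (M : Type u) [AddCommGroup M] [Module R M]
    (xs : List R) : Prop :=
  (∀ x ∈ xs, x ∈ nonunits R) ∧
  ∀ i (_ : i < xs.length),
    ∀ p ∈ associatedPrimes R (M ⧸ (Ideal.ofList (xs.take i) • ⊤ : Submodule R M)),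
      1 < ringKrullDim (R ⧸ p) → xs[i] ∉ p

/-- `xs` is a filter regular sequence of `M`: a sequence of nonunits (elements of the maximal
ideal, in the local case) such that `xs[i] ∉ p` for every non-maximal associated prime `p` of
`M / (xs[0], …, xs[i-1])M` (in a local ring, `¬ p.IsMaximal ↔ p ≠ 𝔪`). -/
def IsFilterRegSeq (R : Type u) [CommRing R] (M : Type u) [AddCommGroup M] [Module R M]
    (xs : List R) : Prop :=
  (∀ x ∈ xs, x ∈ nonunits R) ∧
  ∀ i (_ : i < xs.length),
    ∀ p ∈ associatedPrimes R (M ⧸ (Ideal.ofList (xs.take i) • ⊤ : Submodule R M)),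
      ¬ p.IsMaximal → xs[i] ∉ p

open Classical in
/-- The generalized depth `gd(I, M)`: the length of a maximal generalized regular sequence of `M`
contained in `I` (equivalently, the sup of lengths of all such sequences) if `dim M/IM > 1`,
and `∞` if `dim M/IM ≤ 1`. -/
def gd {R : Type u} [CommRing R] (I : Ideal R) (M : Type u) [AddCommGroup M] [Module R M] :
    ℕ∞ :=
  if moduleDim R (M ⧸ (I • ⊤ : Submodule R M)) ≤ 1 then ⊤
  else sSup {n : ℕ∞ |
    ∃ xs : List R, IsGenRegSeq R M xs ∧ (∀ x ∈ xs, x ∈ I) ∧ (xs.length : ℕ∞) = n}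

/-- The filter depth `fd(I, M)`: the length of a maximal filter regular sequence of `M`
contained in `I` (equivalently, the sup of lengths of all such sequences). -/
def fd {R : Type u} [CommRing R] (I : Ideal R) (M : Type u) [AddCommGroup M] [Module R M] :
    ℕ∞ :=
  sSup {n : ℕ∞ |
    ∃ xs : List R, IsFilterRegSeq R M xs ∧ (∀ x ∈ xs, x ∈ I) ∧ (xs.length : ℕ∞) = n}

/-- The filter depth of `I` on `M`, characterized via local cohomology:
`fd(I, M) = inf { r : H^r_I(M) is not an Artinian R-module }` (`∞` if no such `r`). -/
def fdLC {R : Type u} [CommRing R] (I : Ideal R) (M : Type u) [AddCommGroup M] [Module R M] :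
    ℕ∞ :=
  sInf ((fun r : ℕ => (r : ℕ∞)) ''
    {r : ℕ | ¬ IsArtinian R ↥((localCohomology I r).obj (ModuleCat.of R M))})

/-- `xs` is a system of parameters of `M`: a sequence of `dim M` many elements of the maximal
ideal (nonunits) with `dim M/(xs)M = 0`. -/
def IsSOP (R : Type u) [CommRing R] (M : Type u) [AddCommGroup M] [Module R M]
    (xs : List R) : Prop :=
  (∀ x ∈ xs, x ∈ nonunits R) ∧ (xs.length : WithBot ℕ∞) = moduleDim R M ∧
  moduleDim R (M ⧸ (Ideal.ofList xs • ⊤ : Submodule R M)) = 0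

/-- `M` is a generalized f-module: every system of parameters of `M` is a generalized regular
sequence of `M`. -/
def IsGenFModule (R : Type u) [CommRing R] (M : Type u) [AddCommGroup M] [Module R M] : Prop :=
  ∀ xs : List R, IsSOP R M xs → IsGenRegSeq R M xs

/-- `M` is an f-module: every system of parameters of `M` is a filter regular sequence of `M`. -/
def IsFModule (R : Type u) [CommRing R] (M : Type u) [AddCommGroup M] [Module R M] : Prop :=
  ∀ xs : List R, IsSOP R M xs → IsFilterRegSeq R M xs

/-- A generalized f-ring: a generalized f-module over itself. -/
def IsGenFRing (R : Type u) [CommRing R] : Prop := IsGenFModule R R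

/-- An f-ring: an f-module over itself. -/
def IsFRing (R : Type u) [CommRing R] : Prop := IsFModule R R

/-- `M` is a maximal generalized f-module: `gd(p, M) = dim R - dim R/p`
(stated additively, as `gd(p, M) + dim R/p = dim R`) for every prime `p` in the support of `M`
with `dim R/p > 1`. -/
def IsMaxGenFModule (R : Type u) [CommRing R] (M : Type u) [AddCommGroup M] [Module R M] :
    Prop :=
  ∀ (p : Ideal R) (hp : p.IsPrime), (⟨p, hp⟩ : PrimeSpectrum R) ∈ Module.support R M →
    1 < ringKrullDim (R ⧸ p) →
    dimAdd (gd p M) (ringKrullDim (R ⧸ p)) = ringKrullDim R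

/-- `M` is a maximal f-module: `fd(p, M) = dim R - dim R/p`
(stated additively, as `fd(p, M) + dim R/p = dim R`) for every prime `p ≠ 𝔪` in the support of
`M` (in a local ring, `¬ p.IsMaximal ↔ p ≠ 𝔪`). -/
def IsMaxFModule (R : Type u) [CommRing R] [IsLocalRing R] (M : Type u) [AddCommGroup M]
    [Module R M] : Prop :=
  ∀ (p : Ideal R) (hp : p.IsPrime), (⟨p, hp⟩ : PrimeSpectrum R) ∈ Module.support R M →
    p ≠ maximalIdeal R →
    dimAdd (fd p M) (ringKrullDim (R ⧸ p)) = ringKrullDim R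

/-- The depth of a module over a local ring: the length of a maximal `M`-regular sequence of
nonunits (i.e. contained in the maximal ideal, in the local case). -/
def moduleDepth (R : Type u) [CommRing R] (M : Type u) [AddCommGroup M] [Module R M] : ℕ∞ :=
  sSup {n : ℕ∞ |
    ∃ xs : List R, IsRegular M xs ∧ (∀ x ∈ xs, x ∈ nonunits R) ∧ (xs.length : ℕ∞) = n}

/-- `M` is a maximal Cohen-Macaulay module over the local ring `R`: `depth M = dim R`. -/
def IsMaxCM (R : Type u) [CommRing R] (M : Type u) [AddCommGroup M] [Module R M] : Prop :=
  (moduleDepth R M : WithBot ℕ∞) = ringKrullDim R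

/-- The amalgamation `R ⋈^f J` of `R` with `S` along the ideal `J ⊆ S` with respect to
`f : R →+* S`: the subring `{(r, f r + j) : r ∈ R, j ∈ J}` of `R × S`, here described as
`{(r, s) : s - f r ∈ J}`. -/
def Amalg {R S : Type u} [CommRing R] [CommRing S] (f : R →+* S) (J : Ideal S) :
    Subring (R × S) where
  carrier := {x | x.2 - f x.1 ∈ J}
  one_mem' := by simp
  zero_mem' := by simp
  add_mem' := by
    intro a b ha hb
    show (a + b).2 - f (a + b).1 ∈ J
    have h : (a + b).2 - f (a + b).1 = (a.2 - f a.1) + (b.2 - f b.1) := by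
      simp only [Prod.fst_add, Prod.snd_add, map_add]; ring
    rw [h]; exact J.add_mem ha hb
  neg_mem' := by
    intro a ha
    show (-a).2 - f (-a).1 ∈ J
    have h : (-a).2 - f (-a).1 = -(a.2 - f a.1) := by
      simp only [Prod.fst_neg, Prod.snd_neg, map_neg]; ring
    rw [h]; exact J.neg_mem ha
  mul_mem' := by
    intro a b ha hb
    show (a * b).2 - f (a * b).1 ∈ J
    have h : (a * b).2 - f (a * b).1 = (a.2 - f a.1) * b.2 + f a.1 * (b.2 - f b.1) := by
      simp only [Prod.fst_mul, Prod.snd_mul, map_mul]; ring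
    rw [h]; exact J.add_mem (J.mul_mem_right _ ha) (J.mul_mem_left _ hb)

/-- The canonical embedding `ι_R : R → R ⋈^f J`, `r ↦ (r, f r)`. -/
def amalgHom {R S : Type u} [CommRing R] [CommRing S] (f : R →+* S) (J : Ideal S) :
    R →+* ↥(Amalg f J) :=
  ((RingHom.id R).prod f).codRestrict _ (fun r => by
    show ((r, f r) : R × S).2 - f ((r, f r) : R × S).1 ∈ J
    simp)

/-!
`R ⋈^f J = ι_R(R) + (0 × J)`, so a finite generating set of `J` over `R` together with `1`
generates `R ⋈^f J` as an `R`-module; hence `ι_R` is finite, in particular integral, and it is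
injective (compose with the first projection). For an injective integral extension, lying over
gives `(pᵉ)ᶜ = p`, so `R/p → (R ⋈^f J)/pᵉ` is again an injective integral extension; lying over
with going up lifts chains of primes, and incomparability pushes chains down, so the two
dimensions agree.
-/

section IntegralExtension

variable {R A : Type*} [CommRing R] [CommRing A] [Algebra R A] [Algebra.IsIntegral R A]

theorem ringKrullDim_le_of_isIntegral : ringKrullDim A ≤ ringKrullDim R :=
  Order.krullDim_le_of_strictMono (PrimeSpectrum.comap (algebraMap R A))
    fun _ _ h => Ideal.IsIntegral.comap_lt_comap (R := R) h

variable [FaithfulSMul R A]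

theorem ringKrullDim_eq_of_isIntegral : ringKrullDim A = ringKrullDim R := by
  refine le_antisymm ringKrullDim_le_of_isIntegral (iSup_le fun l => ?_)
  obtain ⟨⟨P, _, _⟩⟩ := Ideal.nonempty_primesOver (S := A) l.head.asIdeal
  obtain ⟨L, hlen, -⟩ := Ideal.exists_ltSeries_of_hasGoingUp l P
  exact hlen ▸ Order.LTSeries.length_le_krullDim L

theorem Ideal.comap_map_eq_self_of_isIntegral (p : Ideal R) [p.IsPrime] :
    (p.map (algebraMap R A)).comap (algebraMap R A) = p := by
  obtain ⟨⟨P, hP, hPp⟩⟩ := Ideal.nonempty_primesOver (S := A) p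
  exact (Ideal.comap_map_eq_self_iff_of_isPrime p).2 ⟨P, hP, hPp.over.symm⟩

theorem ringKrullDim_quotient_map_eq_of_isIntegral (p : Ideal R) [p.IsPrime] :
    ringKrullDim (A ⧸ p.map (algebraMap R A)) = ringKrullDim (R ⧸ p) := by
  have : Algebra.IsIntegral (R ⧸ p) (A ⧸ p.map (algebraMap R A)) :=
    Algebra.IsIntegral.tower_top R
  have : FaithfulSMul (R ⧸ p) (A ⧸ p.map (algebraMap R A)) :=
    (faithfulSMul_iff_algebraMap_injective _ _).2 <|
      Ideal.quotientMap_injective' (Ideal.comap_map_eq_self_of_isIntegral p).le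
  exact ringKrullDim_eq_of_isIntegral

end IntegralExtension

section Amalgamation

variable {R S : Type u} [CommRing R] [CommRing S] (f : R →+* S) (J : Ideal S)

theorem amalgHom_injective : Function.Injective (amalgHom f J) := fun _ _ h =>
  congrArg (fun x : Amalg f J => (x : R × S).1) h

theorem amalgHom_finite (hfg : letI : Module R J := Module.compHom J f; Module.Finite R J) :
    (amalgHom f J).Finite := by
  let : Module R J := Module.compHom J f
  let : Algebra R (Amalg f J) := (amalgHom f J).toAlgebra
  let inclJ : J →ₗ[R] Amalg f J :=
    { toFun := fun j => ⟨(0, j), by simp [Amalg]⟩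
      map_add' := fun x y => by ext <;> simp
      map_smul' := fun r x => Subtype.ext (Prod.ext (mul_zero r).symm rfl) }
  refine Module.Finite.of_surjective ((Algebra.linearMap R (Amalg f J)).coprod inclJ) ?_
  rintro ⟨⟨r, s⟩, hrs⟩
  refine ⟨(r, ⟨s - f r, hrs⟩), ?_⟩
  ext <;> simp [inclJ, RingHom.algebraMap_toAlgebra, amalgHom]

end Amalgamation

theorem statement2_general {R S : Type u} [CommRing R] [CommRing S] (f : R →+* S) (J : Ideal S)
    (hfg : letI : Module R ↥J := Module.compHom ↥J f; Module.Finite R ↥J) :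
    (amalgHom f J).IsIntegral ∧
    ∀ p : Ideal R, p.IsPrime →
      (Ideal.map (amalgHom f J) p).comap (amalgHom f J) = p ∧
      ringKrullDim (↥(Amalg f J) ⧸ Ideal.map (amalgHom f J) p) = ringKrullDim (R ⧸ p) := by
  let : Algebra R (Amalg f J) := (amalgHom f J).toAlgebra
  have hint : (amalgHom f J).IsIntegral := (amalgHom_finite f J hfg).to_isIntegral
  have : Algebra.IsIntegral R (Amalg f J) := ⟨hint⟩
  have : FaithfulSMul R (Amalg f J) :=
    (faithfulSMul_iff_algebraMap_injective _ _).2 (amalgHom_injective f J)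
  exact ⟨hint, fun p _ => ⟨Ideal.comap_map_eq_self_of_isIntegral p,
    ringKrullDim_quotient_map_eq_of_isIntegral p⟩⟩

/-- If `J` is an ideal of `S` which is finitely generated as an `R`-module via
`f : R → S`, then `ι_R : R → R ⋈^f J` is integral, and for every prime `p` of `R` one has
`(pᵉ)ᶜ = p` and `dim ((R ⋈^f J) / pᵉ) = dim (R/p)`. -/
theorem statement2 {R S : Type u} [CommRing R] [CommRing S] (f : R →+* S) (J : Ideal S)
    (hJ0 : J ≠ ⊥) (hJ1 : J ≠ ⊤)
    (hfg : letI : Module R ↥J := Module.compHom ↥J f; Module.Finite R ↥J) :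
    (amalgHom f J).IsIntegral ∧
    ∀ p : Ideal R, p.IsPrime →
      (Ideal.map (amalgHom f J) p).comap (amalgHom f J) = p ∧
      ringKrullDim (↥(Amalg f J) ⧸ Ideal.map (amalgHom f J) p) = ringKrullDim (R ⧸ p) :=
  statement2_general f J hfg
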